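/- arXiv:1402.0183 — 2 statements merged into one kernel-verified Lean document; each statement's English description precedes it below -/
import Mathlib

section
/- Let C0 ≥ 1, h ≥ 0, t ∈ ℝ, u = it + h, and let s ≥ 1 be an integer. Let X be a random variable taking values in the nonnegative integers with X ≤ C0 almost surely, and let ν_m = E[X(X−1)⋯(X−m+1)] denote its m-th factorial moment. Then |E[X e^{uX}] − Σ_{m=1}^s (ν_m/(m−1)!) e^u (e^u − 1)^{m−1}| ≤ e^{hC0}(e^h + 1)^{s} ν_{s+1}/s!. -/
open MeasureTheory Finset
open scoped BigOperators

/-- `m`-th factorial moment `ν_m = E[X(X-1)⋯(X-m+1)]` of a ℕ-valued random variable. -/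
noncomputable def facMoment {Ω : Type*} [MeasurableSpace Ω] (μ : Measure Ω)
    (X : Ω → ℕ) (m : ℕ) : ℝ :=
  ∫ ω, (Nat.descFactorial (X ω) m : ℝ) ∂μ

/-!
Write `n = M + 1` and `z = e^u - 1`. On the event `X = n` the factorial-moment sum equals
`n e^u ∑_{k<s} C(M,k) z^k`, a truncation of `n e^u (1 + z)^M = n e^{un}`. The binomial tail
`T(M) = (1 + z)^M - ∑_{k<s} C(M,k) z^k` obeys `T(M+1) = (1 + z) T(M) + C(M,s-1) z^s`, so by
induction `‖T(M)‖ ≤ C(M,s) ‖z‖^s ‖1 + z‖^M` as soon as `‖1 + z‖ = e^h ≥ 1`. Since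
`n C(M,s) = n^{(s+1)}/s!`, integrating this pointwise bound gives the estimate.
-/

open scoped Nat

section BinomialTail

variable {R : Type*}

theorem one_add_pow_succ_sub_sum_choose [CommRing R] (z : R) (M s : ℕ) :
    (1 + z) ^ (M + 1) - ∑ k ∈ range (s + 1), ((M + 1).choose k : R) * z ^ k =
      (1 + z) * ((1 + z) ^ M - ∑ k ∈ range (s + 1), (M.choose k : R) * z ^ k) +
        (M.choose s : R) * z ^ (s + 1) := by
  induction s with
  | zero =>
    simp only [zero_add, range_one, sum_singleton, Nat.choose_zero_right, Nat.cast_one, pow_zero,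
      mul_one, pow_one, one_mul]
    ring
  | succ s ih =>
    rw [sum_range_succ (fun k => ((M + 1).choose k : R) * z ^ k) (s + 1),
      sum_range_succ (fun k => (M.choose k : R) * z ^ k) (s + 1), Nat.choose_succ_succ',
      Nat.cast_add]
    linear_combination ih

theorem norm_one_add_pow_sub_sum_choose_le [NormedCommRing R] [NormOneClass R] {z : R} {B : ℝ}
    (hB : 1 ≤ B) (hz : ‖1 + z‖ ≤ B) (M s : ℕ) :
    ‖(1 + z) ^ M - ∑ k ∈ range s, (M.choose k : R) * z ^ k‖ ≤ M.choose s * ‖z‖ ^ s * B ^ M := by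
  induction M generalizing s with
  | zero => cases s <;> simp [sum_range_succ']
  | succ M ih =>
    cases s with
    | zero => simpa using (norm_pow_le _ _).trans (pow_le_pow_left₀ (norm_nonneg _) hz _)
    | succ s =>
      rw [one_add_pow_succ_sub_sum_choose]
      have hcast : ‖(M.choose s : R)‖ ≤ M.choose s := by simpa using Nat.norm_cast_le (α := R) _
      calc _ ≤ ‖1 + z‖ * ‖(1 + z) ^ M - ∑ k ∈ range (s + 1), (M.choose k : R) * z ^ k‖ +
              ‖(M.choose s : R)‖ * ‖z‖ ^ (s + 1) :=
            (norm_add_le _ _).trans (add_le_add (norm_mul_le _ _)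
              ((norm_mul_le _ _).trans (by gcongr; exact norm_pow_le _ _)))
        _ ≤ B * (M.choose (s + 1) * ‖z‖ ^ (s + 1) * B ^ M) +
              M.choose s * ‖z‖ ^ (s + 1) * B ^ (M + 1) :=
            add_le_add (mul_le_mul hz (ih _) (norm_nonneg _) (by linarith))
              ((mul_le_mul_of_nonneg_right hcast (by positivity)).trans
                (le_mul_of_one_le_right (by positivity) (one_le_pow₀ hB)))
        _ = _ := by rw [Nat.choose_succ_succ', Nat.cast_add]; ring

end BinomialTail

noncomputable def factorialMomentExpansion (ν : ℕ → ℝ) (E : ℂ) (s : ℕ) : ℂ :=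
  ∑ m ∈ Icc 1 s, ((ν m / (m - 1)! : ℝ) : ℂ) * E * (E - 1) ^ (m - 1)

theorem factorialMomentExpansion_descFactorial_succ (M : ℕ) (E : ℂ) (s : ℕ) :
    factorialMomentExpansion (fun m => ((M + 1).descFactorial m : ℝ)) E s =
      (M + 1 : ℂ) * E * ∑ k ∈ range s, (M.choose k : ℂ) * (E - 1) ^ k := by
  rw [factorialMomentExpansion, ← Ico_add_one_right_eq_Icc, sum_Ico_eq_sum_range, mul_sum]
  refine sum_congr (by simp) fun k _ => ?_
  have hk : ((k ! : ℕ) : ℂ) ≠ 0 := Nat.cast_ne_zero.2 k.factorial_ne_zero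
  rw [add_comm 1 k, Nat.add_sub_cancel, Nat.succ_descFactorial_succ,
    Nat.descFactorial_eq_factorial_mul_choose]
  push_cast
  field_simp

theorem norm_natCast_mul_pow_sub_factorialMomentExpansion_le {E : ℂ} (hE : 1 ≤ ‖E‖) (n s : ℕ) :
    ‖(n : ℂ) * E ^ n - factorialMomentExpansion (fun m => (n.descFactorial m : ℝ)) E s‖ ≤
      ‖E‖ ^ n * (‖E‖ + 1) ^ s * n.descFactorial (s + 1) / s ! := by
  cases n with
  | zero =>
    have : factorialMomentExpansion (fun m => ((0 : ℕ).descFactorial m : ℝ)) E s = 0 :=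
      sum_eq_zero fun m hm => by simp [Nat.descFactorial_eq_zero_iff_lt.2 (mem_Icc.1 hm).1]
    simp [this]
  | succ M =>
    have hz : ‖E - 1‖ ≤ ‖E‖ + 1 := by simpa using norm_sub_le E 1
    have htail := norm_one_add_pow_sub_sum_choose_le (z := E - 1) hE (by rw [add_sub_cancel]) M s
    rw [add_sub_cancel] at htail
    have hsplit : ((M + 1 : ℕ) : ℂ) * E ^ (M + 1) -
        (M + 1 : ℂ) * E * ∑ k ∈ range s, (M.choose k : ℂ) * (E - 1) ^ k =
        ((M + 1 : ℕ) : ℂ) * E * (E ^ M - ∑ k ∈ range s, (M.choose k : ℂ) * (E - 1) ^ k) := by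
      push_cast; ring
    rw [factorialMomentExpansion_descFactorial_succ, hsplit, norm_mul, norm_mul,
      Complex.norm_natCast, Nat.succ_descFactorial_succ, Nat.descFactorial_eq_factorial_mul_choose]
    calc _ ≤ ((M + 1 : ℕ) : ℝ) * ‖E‖ * (M.choose s * (‖E‖ + 1) ^ s * ‖E‖ ^ M) := by
          gcongr; exact htail.trans (by gcongr)
      _ = _ := by push_cast; field_simp; ring

theorem integrable_comp_of_ae_le {Ω F : Type*} [MeasurableSpace Ω] [NormedAddCommGroup F]
    {μ : Measure Ω} [IsFiniteMeasure μ] {X : Ω → ℕ} (hX : Measurable X) {C : ℝ}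
    (hC : ∀ᵐ ω ∂μ, (X ω : ℝ) ≤ C) (f : ℕ → F) : Integrable (fun ω => f (X ω)) μ := by
  -- almost surely `X` takes one of the finitely many values `≤ ⌊C⌋₊`
  refine Integrable.of_bound
    (StronglyMeasurable.of_discrete.comp_measurable hX).aestronglyMeasurable
    (∑ n ∈ range (⌊C⌋₊ + 1), ‖f n‖) ?_
  filter_upwards [hC] with ω hω
  exact single_le_sum (f := fun n => ‖f n‖) (fun _ _ => norm_nonneg _)
    (mem_range_succ_iff.2 (Nat.le_floor hω))

theorem integral_factorialMomentExpansion {Ω : Type*} [MeasurableSpace Ω] {μ : Measure Ω}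
    {X : Ω → ℕ} (hX : ∀ m, Integrable (fun ω => ((X ω).descFactorial m : ℝ)) μ) (E : ℂ) (s : ℕ) :
    ∫ ω, factorialMomentExpansion (fun m => ((X ω).descFactorial m : ℝ)) E s ∂μ =
      factorialMomentExpansion (facMoment μ X) E s := by
  unfold factorialMomentExpansion
  dsimp only
  rw [integral_finsetSum _ fun m _ => (((hX m).div_const _).ofReal.mul_const _).mul_const _]
  refine sum_congr rfl fun m _ => ?_
  rw [integral_mul_const, integral_mul_const, integral_complex_ofReal, integral_div, facMoment]

theorem exp_moment_derivative_expansion_general (C0 h t : ℝ) (hh : 0 ≤ h)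
    (u : ℂ) (hu : u = t * Complex.I + h) (s : ℕ)
    (Ω : Type*) [MeasurableSpace Ω] (μ : Measure Ω) [IsProbabilityMeasure μ]
    (X : Ω → ℕ) (hX : Measurable X) (hbd : ∀ᵐ ω ∂μ, ((X ω : ℝ)) ≤ C0) :
    ‖((∫ ω, (X ω : ℂ) * Complex.exp (u * X ω) ∂μ) -
        ∑ m ∈ Finset.Icc 1 s,
          ((facMoment μ X m / (Nat.factorial (m - 1)) : ℝ) : ℂ)
            * Complex.exp u * (Complex.exp u - 1) ^ (m - 1))‖ ≤
      Real.exp (h * C0) * (Real.exp h + 1) ^ s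
        * facMoment μ X (s + 1) / (Nat.factorial s) := by
  set E := Complex.exp u
  have hE : ‖E‖ = Real.exp h := by simp [E, Complex.norm_exp, hu]
  have hint {F : Type} [NormedAddCommGroup F] (f : ℕ → F) :
      Integrable (fun ω => f (X ω)) μ :=
    integrable_comp_of_ae_le hX hbd f
  have hpow (n : ℕ) : Complex.exp (u * n) = E ^ n := by rw [mul_comm, Complex.exp_nat_mul]
  change ‖_ - factorialMomentExpansion (facMoment μ X) E s‖ ≤ _
  simp_rw [hpow]
  rw [← integral_factorialMomentExpansion fun m => hint fun n => (n.descFactorial m : ℝ),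
    ← integral_sub (hint fun n => (n : ℂ) * E ^ n)
      (hint fun n => factorialMomentExpansion (fun m => (n.descFactorial m : ℝ)) E s)]
  set K := Real.exp (h * C0) * (Real.exp h + 1) ^ s with hK
  calc _ ≤ ∫ ω, K * (X ω).descFactorial (s + 1) / s ! ∂μ := by
        refine norm_integral_le_of_norm_le (hint fun n => K * n.descFactorial (s + 1) / s !) ?_
        filter_upwards [hbd] with ω hω
        refine (norm_natCast_mul_pow_sub_factorialMomentExpansion_le
          (hE ▸ Real.one_le_exp hh) (X ω) s).trans ?_
        rw [hE, ← Real.exp_nat_mul, mul_comm ((X ω : ℕ) : ℝ) h, hK]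
        gcongr
    _ = _ := by rw [facMoment, integral_div, integral_const_mul]

/-- Relation (22): expansion of `E[X e^{uX}]` in factorial moments, `u = it + h`. -/
theorem exp_moment_derivative_expansion (C0 h t : ℝ) (hC0 : 1 ≤ C0) (hh : 0 ≤ h)
    (u : ℂ) (hu : u = t * Complex.I + h) (s : ℕ) (hs : 1 ≤ s)
    (Ω : Type*) [MeasurableSpace Ω] (μ : Measure Ω) [IsProbabilityMeasure μ]
    (X : Ω → ℕ) (hX : Measurable X) (hbd : ∀ᵐ ω ∂μ, ((X ω : ℝ)) ≤ C0) :
    ‖((∫ ω, (X ω : ℂ) * Complex.exp (u * X ω) ∂μ) -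
        ∑ m ∈ Finset.Icc 1 s,
          ((facMoment μ X m / (Nat.factorial (m - 1)) : ℝ) : ℂ)
            * Complex.exp u * (Complex.exp u - 1) ^ (m - 1))‖ ≤
      Real.exp (h * C0) * (Real.exp h + 1) ^ s
        * facMoment μ X (s + 1) / (Nat.factorial s) :=
  exp_moment_derivative_expansion_general C0 h t hh u hu s Ω μ X hX hbd
end

section
/- Let C0 ≥ 1, h ≥ 0, t ∈ ℝ, u = it + h, and let X_1,…,X_n be 1-dependent random variables taking values in the nonnegative integers with X_i ≤ C0 almost surely. Set a = e^{hC0}(2+h)√C0 and assume a²·max_{1≤j≤n} ν_1(j) ≤ 1/100. Then Heinrich's functions φ_1(u),…,φ_n(u) are well-defined (all denominators in the recursion are nonzero) and for every k = 1,…,n: |φ_k(u) − 1| ≤ (a²/6)[10ν_1(k−1) + 13ν_1(k)], |φ_k(u) − 1| ≤ 1/25, and 1/|φ_k(u)| ≤ 10/9, where ν_1(k) = E[X_k] and ν_1(0) = 0. -/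
open MeasureTheory ProbabilityTheory Filter Finset
open scoped BigOperators

/-- `X 1, …, X n` is a 1-dependent sequence: for `1 ≤ r ≤ n - 2` the σ-algebra
generated by `X 1, …, X r` is independent of the one generated by `X (r+2), …, X n`. -/
def OneDependent {Ω : Type*} [MeasurableSpace Ω] (μ : Measure Ω) (n : ℕ)
    (X : ℕ → Ω → ℕ) : Prop :=
  ∀ r : ℕ, 1 ≤ r → r + 2 ≤ n →
    Indep (⨆ i ∈ Finset.Icc 1 r, MeasurableSpace.comap (X i) ⊤)
          (⨆ i ∈ Finset.Icc (r + 2) n, MeasurableSpace.comap (X i) ⊤) μ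

/-- Heinrich's cumulant functional `Ê(U_j, …, U_k)`, defined recursively by
`Ê(U_j) = E U_j` and
`Ê(U_j,…,U_k) = E[U_j⋯U_k] - Σ_{l=j}^{k-1} Ê(U_j,…,U_l)·E[U_{l+1}⋯U_k]`. -/
noncomputable def heinrichE {Ω : Type*} [MeasurableSpace Ω] (μ : Measure Ω)
    (U : ℕ → Ω → ℂ) (j : ℕ) (k : ℕ) : ℂ :=
  (∫ ω, ∏ i ∈ Finset.Icc j k, U i ω ∂μ)
    - ∑ l ∈ (Finset.Ico j k).attach,
        heinrichE μ U j l.1 * ∫ ω, ∏ i ∈ Finset.Icc (l.1 + 1) k, U i ω ∂μ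
termination_by k
decreasing_by exact (Finset.mem_Ico.mp l.2).2

/-- Heinrich's functions `φ_k(u)`: `φ_1(u) = E e^{uX_1}` and, for `k ≥ 2`,
`φ_k(u) = 1 + E Y_k + Σ_{j=1}^{k-1} Ψ_{jk} / (φ_j(u)⋯φ_{k-1}(u))`, where
`Y_j = e^{uX_j} - 1` and `Ψ_{jk} = Ê(Y_j,…,Y_k)`. -/
noncomputable def heinrichPhi {Ω : Type*} [MeasurableSpace Ω] (μ : Measure Ω)
    (X : ℕ → Ω → ℕ) (u : ℂ) : ℕ → ℂ
  | 0 => 1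
  | 1 => ∫ ω, Complex.exp (u * (X 1 ω : ℂ)) ∂μ
  | k + 2 =>
      1 + (∫ ω, (Complex.exp (u * (X (k + 2) ω : ℂ)) - 1) ∂μ)
        + ∑ j ∈ (Finset.Icc 1 (k + 1)).attach,
            heinrichE μ (fun i ω => Complex.exp (u * (X i ω : ℂ)) - 1) j.1 (k + 2) /
              ∏ i ∈ (Finset.Icc j.1 (k + 1)).attach, heinrichPhi μ X u i.1
termination_by k => k
decreasing_by
  exact lt_of_le_of_lt (Finset.mem_Icc.mp i.2).2 (Nat.lt_succ_self _)

/-!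
Write `Y_i = e^{u X_i} - 1` and `ρ_i = (E|Y_i|²)^{1/2}`. Since `X_i` is a natural number at most
`C0`, `|Y_i| ≤ e^{hC0} (2 + h) X_i`, whence `|E Y_i| ≤ (a²/2) ν₁(i)` and `ρ_i² ≤ a² ν₁(i) ≤ 1/100`.
Splitting a block `Y_j ⋯ Y_k` into its factors of even and of odd index, Cauchy–Schwarz and
1-dependence give `|E Y_j ⋯ Y_k| ≤ ρ_j ⋯ ρ_k`, and Heinrich's recursion for the cumulants then
gives `|Ψ_{jk}| ≤ 2^{k-j} ρ_j ⋯ ρ_k`. By induction on `k`, `|φ_i| ≥ 9/10` for `i < k`, so the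
`j`-th term of the recursion for `φ_k` is at most `10 (2/9)^{k-j} ρ_{k-1} ρ_k`; summing the
geometric series, `|φ_k - 1| ≤ |E Y_k| + (20/7) ρ_{k-1} ρ_k ≤ (a²/6)(10 ν₁(k-1) + 13 ν₁(k))`,
which is at most `23/600 < 1/25`.
-/

lemma Finset.prod_Icc_consecutive {M : Type*} [CommMonoid M] (f : ℕ → M) {j l k : ℕ}
    (hjl : j ≤ l + 1) (hlk : l ≤ k) :
    (∏ i ∈ Icc j l, f i) * ∏ i ∈ Icc (l + 1) k, f i = ∏ i ∈ Icc j k, f i := by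
  simp only [← Ico_add_one_right_eq_Icc]
  exact prod_Ico_consecutive f hjl (by omega)

lemma sum_Ico_two_pow_sub (j k : ℕ) : ∑ l ∈ Ico j k, (2 : ℝ) ^ (l - j) = 2 ^ (k - j) - 1 := by
  rw [sum_Ico_eq_sum_range]
  simp only [Nat.add_sub_cancel_left]
  rw [geom_sum_eq (by norm_num : (2 : ℝ) ≠ 1)]
  norm_num

lemma sum_Icc_pow_sub_le {x : ℝ} (hx0 : 0 ≤ x) (hx1 : x < 1) (k : ℕ) :
    ∑ j ∈ Icc 1 (k + 1), x ^ (k + 2 - j) ≤ x / (1 - x) := by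
  rw [← Ico_add_one_right_eq_Icc, sum_Ico_reflect (x ^ ·) 1 (by omega : k + 1 + 1 ≤ k + 2 + 1)]
  simpa using geom_sum_Ico_le_of_lt_one (m := 1) (n := k + 2) hx0 hx1

lemma one_sub_le_norm_of_norm_sub_one_le {E : Type*} [SeminormedRing E] [NormOneClass E] {z : E}
    {ε : ℝ} (hz : ‖z - 1‖ ≤ ε) : 1 - ε ≤ ‖z‖ := by
  have := norm_sub_norm_le (1 : E) z
  rw [norm_one, norm_sub_rev] at this
  linarith

theorem integral_mul_le_sqrt_mul_sqrt_of_nonneg {Ω : Type*} [MeasurableSpace Ω] {μ : Measure Ω}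
    {f g : Ω → ℝ} (hf0 : 0 ≤ᵐ[μ] f) (hg0 : 0 ≤ᵐ[μ] g) (hf : MemLp f 2 μ) (hg : MemLp g 2 μ) :
    ∫ ω, f ω * g ω ∂μ ≤ √(∫ ω, f ω ^ 2 ∂μ) * √(∫ ω, g ω ^ 2 ∂μ) := by
  have h2 : ENNReal.ofReal 2 = 2 := by norm_num
  have key := integral_mul_le_Lp_mul_Lq_of_nonneg Real.HolderConjugate.two_two hf0 hg0
    (h2 ▸ hf) (h2 ▸ hg)
  simpa only [Real.sqrt_eq_rpow, one_div, Real.rpow_two] using key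

section OneDependent

lemma measurable_iSup_comap {Ω β : Type*} [MeasurableSpace β] {X : ℕ → Ω → ℕ} {s : Finset ℕ}
    {i : ℕ} (hi : i ∈ s) (g : ℕ → β) :
    Measurable[⨆ i ∈ s, MeasurableSpace.comap (X i) ⊤] (fun ω => g (X i ω)) :=
  (measurable_from_nat.comp (Measurable.of_comap_le le_rfl)).mono
    (le_iSup₂ (f := fun i (_ : i ∈ s) => MeasurableSpace.comap (X i) ⊤) i hi) le_rfl

variable {Ω : Type*} [MeasurableSpace Ω] {μ : Measure Ω} [IsProbabilityMeasure μ] {n : ℕ}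
  {X : ℕ → Ω → ℕ}

theorem OneDependent.integral_prod_eq_prod_integral {𝕜 : Type*} [RCLike 𝕜]
    (hdep : OneDependent μ n X) (hX : ∀ i, Measurable (X i)) (g : ℕ → ℕ → 𝕜) {S : Finset ℕ}
    (hS : ∀ i ∈ S, 1 ≤ i ∧ i ≤ n) (hgap : ∀ i ∈ S, ∀ j ∈ S, i < j → i + 2 ≤ j) :
    ∫ ω, ∏ i ∈ S, g i (X i ω) ∂μ = ∏ i ∈ S, ∫ ω, g i (X i ω) ∂μ := by
  induction S using Finset.induction_on_min with
  | empty => simp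
  | insert a S hlt ih =>
    have haS : a ∉ S := fun ha => lt_irrefl a (hlt a ha)
    simp only [prod_insert haS]
    rw [← ih (fun i hi => hS i (mem_insert_of_mem hi))
      (fun i hi j hj => hgap i (mem_insert_of_mem hi) j (mem_insert_of_mem hj))]
    rcases S.eq_empty_or_nonempty with rfl | ⟨x, hx⟩
    · simp
    have hS' : ∀ i ∈ S, i ∈ Icc (a + 2) n := fun i hi =>
      mem_Icc.2 ⟨hgap a (mem_insert_self a S) i (mem_insert_of_mem hi) (hlt i hi),
        (hS i (mem_insert_of_mem hi)).2⟩
    have hindep := hdep a (hS a (mem_insert_self a S)).1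
      ((mem_Icc.1 (hS' x hx)).1.trans (mem_Icc.1 (hS' x hx)).2)
    have hF := measurable_iSup_comap (X := X)
      (mem_Icc.2 ⟨(hS a (mem_insert_self a S)).1, le_rfl⟩) (g a)
    have hG : Measurable[⨆ i ∈ Icc (a + 2) n, MeasurableSpace.comap (X i) ⊤]
        (fun ω => ∏ i ∈ S, g i (X i ω)) :=
      Finset.measurable_prod S fun i hi => measurable_iSup_comap (hS' i hi) (g i)
    have hFG : IndepFun (fun ω => g a (X a ω)) (fun ω => ∏ i ∈ S, g i (X i ω)) μ := by
      rw [IndepFun_iff_Indep]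
      exact indep_of_indep_of_le_right (indep_of_indep_of_le_left hindep hF.comap_le) hG.comap_le
    exact hFG.integral_mul_eq_mul_integral
      (measurable_from_nat.comp (hX a)).aestronglyMeasurable
      (Finset.measurable_prod S fun i _ => measurable_from_nat.comp (hX i)).aestronglyMeasurable

theorem OneDependent.norm_integral_prod_le {𝕜 : Type*} [RCLike 𝕜]
    (hdep : OneDependent μ n X) (hX : ∀ i, Measurable (X i)) (F : ℕ → ℕ → 𝕜) {c : ℝ}
    {j k : ℕ} (hj : 1 ≤ j) (hk : k ≤ n) (hF : ∀ i ∈ Icc j k, ∀ᵐ ω ∂μ, ‖F i (X i ω)‖ ≤ c) :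
    ‖∫ ω, ∏ i ∈ Icc j k, F i (X i ω) ∂μ‖ ≤
      ∏ i ∈ Icc j k, √(∫ ω, ‖F i (X i ω)‖ ^ 2 ∂μ) := by
  set G : ℕ → Ω → ℝ := fun i ω => ‖F i (X i ω)‖
  have hG_bound : ∀ᵐ ω ∂μ, ∀ i ∈ Icc j k, G i ω ≤ c := (eventually_all_finset _).2 hF
  have half : ∀ T ⊆ Icc j k, (∀ i₁ ∈ T, ∀ i₂ ∈ T, i₁ < i₂ → i₁ + 2 ≤ i₂) →
      MemLp (fun ω => ∏ i ∈ T, G i ω) 2 μ ∧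
      √(∫ ω, (∏ i ∈ T, G i ω) ^ 2 ∂μ) = ∏ i ∈ T, √(∫ ω, G i ω ^ 2 ∂μ) := by
    intro T hT hgap
    refine ⟨MemLp.of_bound (Finset.measurable_prod T fun i _ =>
      (measurable_from_nat (f := fun m => ‖F i m‖)).comp (hX i)).aestronglyMeasurable
        (c ^ T.card) ?_, ?_⟩
    · filter_upwards [hG_bound] with ω hω
      rw [Real.norm_of_nonneg (prod_nonneg fun i _ => norm_nonneg _), ← prod_const]
      exact prod_le_prod (fun i _ => norm_nonneg _) fun i hi => hω i (hT hi)
    · simp_rw [← prod_pow]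
      rw [hdep.integral_prod_eq_prod_integral hX (fun i m => ‖F i m‖ ^ 2)
        (fun i hi => ⟨hj.trans (mem_Icc.1 (hT hi)).1, (mem_Icc.1 (hT hi)).2.trans hk⟩) hgap,
        Real.sqrt_prod _ fun i _ => integral_nonneg fun ω => sq_nonneg _]
  set p : ℕ → Prop := fun i => (i - j) % 2 = 0
  obtain ⟨hE, hE'⟩ := half _ (filter_subset p _) (by
    intro i₁ h₁ i₂ h₂ _
    simp only [p, mem_filter, mem_Icc] at h₁ h₂
    omega)
  obtain ⟨hO, hO'⟩ := half _ (filter_subset (¬ p ·) _) (by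
    intro i₁ h₁ i₂ h₂ _
    simp only [p, mem_filter, mem_Icc] at h₁ h₂
    omega)
  calc ‖∫ ω, ∏ i ∈ Icc j k, F i (X i ω) ∂μ‖
      ≤ ∫ ω, ∏ i ∈ Icc j k, G i ω ∂μ := by
        simpa only [G, norm_prod] using
          norm_integral_le_integral_norm (μ := μ) fun ω => ∏ i ∈ Icc j k, F i (X i ω)
    _ = ∫ ω, (∏ i ∈ Icc j k with p i, G i ω) * ∏ i ∈ Icc j k with ¬ p i, G i ω ∂μ := by
        simp only [prod_filter_mul_prod_filter_not]
    _ ≤ √(∫ ω, (∏ i ∈ Icc j k with p i, G i ω) ^ 2 ∂μ) *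
          √(∫ ω, (∏ i ∈ Icc j k with ¬ p i, G i ω) ^ 2 ∂μ) :=
        integral_mul_le_sqrt_mul_sqrt_of_nonneg
          (ae_of_all _ fun ω => prod_nonneg fun i _ => norm_nonneg _)
          (ae_of_all _ fun ω => prod_nonneg fun i _ => norm_nonneg _) hE hO
    _ = ∏ i ∈ Icc j k, √(∫ ω, G i ω ^ 2 ∂μ) := by
        rw [hE', hO', prod_filter_mul_prod_filter_not]

end OneDependent

section Cumulant

variable {Ω : Type*} [MeasurableSpace Ω] {μ : Measure Ω}

lemma heinrichE_eq (U : ℕ → Ω → ℂ) (j k : ℕ) :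
    heinrichE μ U j k = ∫ ω, ∏ i ∈ Icc j k, U i ω ∂μ -
      ∑ l ∈ Ico j k, heinrichE μ U j l * ∫ ω, ∏ i ∈ Icc (l + 1) k, U i ω ∂μ := by
  rw [heinrichE, sum_attach (Ico j k)
    fun l => heinrichE μ U j l * ∫ ω, ∏ i ∈ Icc (l + 1) k, U i ω ∂μ]

theorem norm_heinrichE_le (U : ℕ → Ω → ℂ) {ρ : ℕ → ℝ} (hρ : ∀ i, 0 ≤ ρ i) {j k : ℕ}
    (hU : ∀ l m, j ≤ l → m ≤ k → ‖∫ ω, ∏ i ∈ Icc l m, U i ω ∂μ‖ ≤ ∏ i ∈ Icc l m, ρ i) :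
    ‖heinrichE μ U j k‖ ≤ 2 ^ (k - j) * ∏ i ∈ Icc j k, ρ i := by
  induction k using Nat.strong_induction_on with
  | _ k ih =>
  have hterm : ∀ l ∈ Ico j k,
      ‖heinrichE μ U j l * ∫ ω, ∏ i ∈ Icc (l + 1) k, U i ω ∂μ‖ ≤
        2 ^ (l - j) * ∏ i ∈ Icc j k, ρ i := by
    intro l hl
    obtain ⟨hjl, hlk⟩ := mem_Ico.1 hl
    rw [norm_mul, ← prod_Icc_consecutive ρ (by omega) hlk.le, ← mul_assoc]
    exact mul_le_mul
      (ih l hlk fun l' m hl' hm => hU l' m hl' (hm.trans hlk.le))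
      (hU (l + 1) k (by omega) le_rfl) (norm_nonneg _)
      (mul_nonneg (by positivity) (prod_nonneg fun i _ => hρ i))
  calc ‖heinrichE μ U j k‖
      ≤ ‖∫ ω, ∏ i ∈ Icc j k, U i ω ∂μ‖ +
          ‖∑ l ∈ Ico j k, heinrichE μ U j l * ∫ ω, ∏ i ∈ Icc (l + 1) k, U i ω ∂μ‖ := by
        rw [heinrichE_eq]
        exact norm_sub_le _ _
    _ ≤ ∏ i ∈ Icc j k, ρ i + ∑ l ∈ Ico j k, 2 ^ (l - j) * ∏ i ∈ Icc j k, ρ i :=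
        add_le_add (hU j k le_rfl le_rfl) ((norm_sum_le _ _).trans (sum_le_sum hterm))
    _ = 2 ^ (k - j) * ∏ i ∈ Icc j k, ρ i := by
        rw [← sum_mul, sum_Ico_two_pow_sub]
        ring

end Cumulant

/-- Each index of `[j, k + 1]` costs a factor `2 / (9/10)`, recovered from `ρ_i ≤ 1/10` on all
indices but the last two. -/
lemma norm_div_prod_le {Ψ : ℂ} {z : ℕ → ℂ} {ρ : ℕ → ℝ} {j k : ℕ} (hjk : j ≤ k + 1)
    (hρ : ∀ i, 0 ≤ ρ i) (hρ_le : ∀ i ∈ Icc j k, ρ i ≤ 1 / 10)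
    (hz : ∀ i ∈ Icc j (k + 1), 9 / 10 ≤ ‖z i‖)
    (hΨ : ‖Ψ‖ ≤ 2 ^ (k + 2 - j) * ∏ i ∈ Icc j (k + 2), ρ i) :
    ‖Ψ / ∏ i ∈ Icc j (k + 1), z i‖ ≤ 10 * (2 / 9) ^ (k + 2 - j) * (ρ (k + 1) * ρ (k + 2)) := by
  set m := k + 1 - j
  have hm : k + 2 - j = m + 1 := by omega
  have hρ_prod : ∏ i ∈ Icc j (k + 2), ρ i ≤ (1 / 10) ^ m * (ρ (k + 1) * ρ (k + 2)) := by
    rw [prod_Icc_succ_top (by omega), prod_Icc_succ_top (by omega), mul_assoc]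
    gcongr
    · exact mul_nonneg (hρ _) (hρ _)
    · calc ∏ i ∈ Icc j k, ρ i ≤ ∏ i ∈ Icc j k, (1 / 10 : ℝ) :=
            prod_le_prod (fun i _ => hρ i) hρ_le
        _ = (1 / 10) ^ m := by rw [prod_const, Nat.card_Icc]
  have hz_prod : (9 / 10 : ℝ) ^ (m + 1) ≤ ‖∏ i ∈ Icc j (k + 1), z i‖ := by
    rw [norm_prod, ← hm, ← Nat.card_Icc, ← prod_const]
    exact prod_le_prod (fun _ _ => by norm_num) hz
  rw [norm_div, hm]
  calc ‖Ψ‖ / ‖∏ i ∈ Icc j (k + 1), z i‖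
      ≤ 2 ^ (m + 1) * ((1 / 10) ^ m * (ρ (k + 1) * ρ (k + 2))) / (9 / 10) ^ (m + 1) := by
        refine div_le_div₀ (by have := hρ (k + 1); have := hρ (k + 2); positivity)
          (hΨ.trans ?_) (by positivity) hz_prod
        rw [hm]
        gcongr
    _ = 10 * (2 / 9) ^ (m + 1) * (ρ (k + 1) * ρ (k + 2)) := by
        rw [div_pow, div_pow, div_pow, one_pow]
        field_simp
        ring

section HeinrichPhi

variable {Ω : Type*} [MeasurableSpace Ω] {μ : Measure Ω} {X : ℕ → Ω → ℕ} {u : ℂ}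

noncomputable def heinrichY (X : ℕ → Ω → ℕ) (u : ℂ) (i : ℕ) (ω : Ω) : ℂ :=
  Complex.exp (u * X i ω) - 1

lemma heinrichPhi_one_sub_one [IsProbabilityMeasure μ] (hY : Integrable (heinrichY X u 1) μ) :
    heinrichPhi μ X u 1 - 1 = ∫ ω, heinrichY X u 1 ω ∂μ := by
  have h := integral_add hY (integrable_const (1 : ℂ))
  simp only [heinrichY, sub_add_cancel, integral_const, probReal_univ, one_smul] at h
  rw [heinrichPhi, h, add_sub_cancel_right]
  rfl

lemma heinrichPhi_add_two (k : ℕ) :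
    heinrichPhi μ X u (k + 2) = 1 + ∫ ω, heinrichY X u (k + 2) ω ∂μ +
      ∑ j ∈ Icc 1 (k + 1),
        heinrichE μ (heinrichY X u) j (k + 2) / ∏ i ∈ Icc j (k + 1), heinrichPhi μ X u i := by
  rw [heinrichPhi]
  simp only [prod_attach _ (heinrichPhi μ X u)]
  exact congrArg (1 + ∫ ω, heinrichY X u (k + 2) ω ∂μ + ·) (sum_attach (Icc 1 (k + 1))
    fun j => heinrichE μ (heinrichY X u) j (k + 2) / ∏ i ∈ Icc j (k + 1), heinrichPhi μ X u i)

theorem norm_heinrichPhi_sub_one_le [IsProbabilityMeasure μ] {n : ℕ} {ρ : ℕ → ℝ}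
    (hρ : ∀ i, 0 ≤ ρ i) (hρ_le : ∀ i, 1 ≤ i → i ≤ n → ρ i ≤ 1 / 10)
    (hY : ∀ i, 1 ≤ i → i ≤ n → Integrable (heinrichY X u i) μ)
    (hE : ∀ j k, 1 ≤ j → k ≤ n →
      ‖heinrichE μ (heinrichY X u) j k‖ ≤ 2 ^ (k - j) * ∏ i ∈ Icc j k, ρ i)
    (hsmall : ∀ k, 1 ≤ k → k ≤ n →
      ‖∫ ω, heinrichY X u k ω ∂μ‖ + 20 / 7 * (ρ (k - 1) * ρ k) ≤ 1 / 10) :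
    ∀ k, 1 ≤ k → k ≤ n →
      ‖heinrichPhi μ X u k - 1‖ ≤ ‖∫ ω, heinrichY X u k ω ∂μ‖ + 20 / 7 * (ρ (k - 1) * ρ k) := by
  intro k
  induction k using Nat.strong_induction_on with
  | _ k ih =>
  intro hk1 hkn
  have hR : 0 ≤ ρ (k - 1) * ρ k := mul_nonneg (hρ _) (hρ _)
  rcases k with _ | _ | k
  · omega
  · rw [heinrichPhi_one_sub_one (hY 1 le_rfl hkn)]
    exact le_add_of_nonneg_right (by positivity)
  have hφ : ∀ i ∈ Icc 1 (k + 1), 9 / 10 ≤ ‖heinrichPhi μ X u i‖ := by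
    intro i hi
    obtain ⟨hi1, hik⟩ := mem_Icc.1 hi
    have h1 := (ih i (by omega) hi1 (by omega)).trans (hsmall i hi1 (by omega))
    linarith [one_sub_le_norm_of_norm_sub_one_le h1]
  have hsum : ‖∑ j ∈ Icc 1 (k + 1), heinrichE μ (heinrichY X u) j (k + 2) /
      ∏ i ∈ Icc j (k + 1), heinrichPhi μ X u i‖ ≤ 20 / 7 * (ρ (k + 1) * ρ (k + 2)) := by
    calc _ ≤ ∑ j ∈ Icc 1 (k + 1), 10 * (2 / 9) ^ (k + 2 - j) * (ρ (k + 1) * ρ (k + 2)) := by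
          refine (norm_sum_le _ _).trans (sum_le_sum fun j hj => ?_)
          obtain ⟨hj1, hjk⟩ := mem_Icc.1 hj
          exact norm_div_prod_le hjk hρ
            (fun i hi => hρ_le i (hj1.trans (mem_Icc.1 hi).1) (by linarith [(mem_Icc.1 hi).2]))
            (fun i hi => hφ i (Icc_subset_Icc_left hj1 hi)) (hE j (k + 2) hj1 hkn)
      _ = 10 * (ρ (k + 1) * ρ (k + 2)) * ∑ j ∈ Icc 1 (k + 1), (2 / 9 : ℝ) ^ (k + 2 - j) := by
          rw [mul_sum]
          exact sum_congr rfl fun j _ => by ring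
      _ ≤ 10 * (ρ (k + 1) * ρ (k + 2)) * ((2 / 9) / (1 - 2 / 9)) := by
          gcongr
          exact sum_Icc_pow_sub_le (by norm_num) (by norm_num) k
      _ = 20 / 7 * (ρ (k + 1) * ρ (k + 2)) := by ring
  rw [heinrichPhi_add_two, add_assoc, add_sub_cancel_left]
  exact (norm_add_le _ _).trans (add_le_add le_rfl hsum)

theorem norm_heinrichPhi_sub_one_le_of_moments [IsProbabilityMeasure μ] {n : ℕ} {a : ℝ}
    {ν : ℕ → ℝ} (hY : ∀ i, 1 ≤ i → i ≤ n → Integrable (heinrichY X u i) μ)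
    (hν : ∀ i ≤ n, 0 ≤ ν i ∧ a ^ 2 * ν i ≤ 1 / 100)
    (hmean : ∀ i ≤ n, ‖∫ ω, heinrichY X u i ω ∂μ‖ ≤ a ^ 2 / 2 * ν i)
    (hsq : ∀ i ≤ n, ∫ ω, ‖heinrichY X u i ω‖ ^ 2 ∂μ ≤ a ^ 2 * ν i)
    (hE : ∀ j k, 1 ≤ j → k ≤ n → ‖heinrichE μ (heinrichY X u) j k‖ ≤
      2 ^ (k - j) * ∏ i ∈ Icc j k, √(∫ ω, ‖heinrichY X u i ω‖ ^ 2 ∂μ)) :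
    ∀ k, 1 ≤ k → k ≤ n →
      ‖heinrichPhi μ X u k - 1‖ ≤ a ^ 2 / 6 * (10 * ν (k - 1) + 13 * ν k) := by
  set ρ : ℕ → ℝ := fun i => √(∫ ω, ‖heinrichY X u i ω‖ ^ 2 ∂μ)
  have hρ : ∀ i, 0 ≤ ρ i := fun _ => Real.sqrt_nonneg _
  have hρ_sq : ∀ i ≤ n, ρ i ^ 2 ≤ a ^ 2 * ν i := fun i hi =>
    (Real.sq_sqrt (integral_nonneg fun _ => sq_nonneg _)).trans_le (hsq i hi)
  have hbound : ∀ k, 1 ≤ k → k ≤ n →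
      ‖∫ ω, heinrichY X u k ω ∂μ‖ + 20 / 7 * (ρ (k - 1) * ρ k) ≤
        a ^ 2 / 6 * (10 * ν (k - 1) + 13 * ν k) := fun k hk1 hkn => by
    nlinarith [hmean k hkn, hρ_sq (k - 1) (by omega), hρ_sq k hkn, sq_nonneg (ρ (k - 1) - ρ k),
      hν (k - 1) (by omega), hν k hkn]
  intro k hk1 hkn
  refine (norm_heinrichPhi_sub_one_le hρ (fun i _ hin => ?_) hY hE (fun l hl1 hln => ?_) k hk1
    hkn).trans (hbound k hk1 hkn)
  · nlinarith [hρ_sq i hin, hν i hin, hρ i]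
  · nlinarith [hbound l hl1 hln, hν (l - 1) (by omega), hν l hln]

end HeinrichPhi

section ExpEstimates

variable {u : ℂ} {h C : ℝ}

/-- For `m ≥ 1` the crude bound `‖e^{um} - 1‖ ≤ e^{hC} + 1` is already linear in `m`. -/
lemma norm_cexp_mul_natCast_sub_one_le (hh : 0 ≤ h) (hu : u.re ≤ h) {m : ℕ} (hm : (m : ℝ) ≤ C) :
    ‖Complex.exp (u * m) - 1‖ ≤ Real.exp (h * C) * (2 + h) * m := by
  rcases Nat.eq_zero_or_pos m with rfl | hm1
  · simp
  have hm1 : (1 : ℝ) ≤ m := by exact_mod_cast hm1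
  have hexp : ‖Complex.exp (u * m)‖ ≤ Real.exp (h * C) := by
    rw [Complex.norm_exp, ← Complex.ofReal_natCast, Complex.re_mul_ofReal]
    exact Real.exp_le_exp.2 (by nlinarith)
  have hexp1 : 1 ≤ Real.exp (h * C) := Real.one_le_exp (by nlinarith)
  calc ‖Complex.exp (u * m) - 1‖ ≤ ‖Complex.exp (u * m)‖ + ‖(1 : ℂ)‖ := norm_sub_le _ _
    _ ≤ Real.exp (h * C) * 2 := by rw [norm_one]; linarith
    _ ≤ Real.exp (h * C) * (2 + h) * m := by
        rw [mul_assoc]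
        gcongr
        nlinarith

lemma facMoment_one {Ω : Type*} [MeasurableSpace Ω] (μ : Measure Ω) (Z : Ω → ℕ) :
    facMoment μ Z 1 = ∫ ω, (Z ω : ℝ) ∂μ := by
  simp [facMoment]

variable {Ω : Type*} [MeasurableSpace Ω] {μ : Measure Ω} [IsFiniteMeasure μ] {Z : Ω → ℕ}

lemma integrable_cexp_mul_sub_one (hh : 0 ≤ h) (hu : u.re ≤ h) (hZ : Measurable Z)
    (hZC : ∀ᵐ ω ∂μ, (Z ω : ℝ) ≤ C) : Integrable (fun ω => Complex.exp (u * Z ω) - 1) μ :=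
  Integrable.of_bound ((measurable_from_nat (f := fun m : ℕ => Complex.exp (u * m) - 1)).comp
    hZ).aestronglyMeasurable (Real.exp (h * C) * (2 + h) * C) <| by
      filter_upwards [hZC] with ω hω
      exact (norm_cexp_mul_natCast_sub_one_le hh hu hω).trans (by gcongr)

lemma integral_le_mul_facMoment_one {f : Ω → ℝ} {c : ℝ} (hf : ∀ ω, 0 ≤ f ω) (hZ : Measurable Z)
    (hZC : ∀ᵐ ω ∂μ, (Z ω : ℝ) ≤ C) (hfZ : ∀ᵐ ω ∂μ, f ω ≤ c * Z ω) :
    ∫ ω, f ω ∂μ ≤ c * facMoment μ Z 1 := by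
  have hZi : Integrable (fun ω => (Z ω : ℝ)) μ :=
    Integrable.of_bound (measurable_from_nat.comp hZ).aestronglyMeasurable C <| by
      filter_upwards [hZC] with ω hω
      rwa [Real.norm_natCast]
  rw [facMoment_one, ← integral_const_mul]
  exact integral_mono_of_nonneg (ae_of_all _ hf) (hZi.const_mul c) hfZ

lemma norm_integral_cexp_mul_sub_one_le (hC : 1 ≤ C) (hh : 0 ≤ h) (hu : u.re ≤ h)
    (hZ : Measurable Z) (hZC : ∀ᵐ ω ∂μ, (Z ω : ℝ) ≤ C) :
    ‖∫ ω, Complex.exp (u * Z ω) - 1 ∂μ‖ ≤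
      (Real.exp (h * C) * (2 + h) * √C) ^ 2 / 2 * facMoment μ Z 1 := by
  have hb : 2 ≤ Real.exp (h * C) * (2 + h) := by
    nlinarith [Real.one_le_exp (by positivity : 0 ≤ h * C)]
  have hν : 0 ≤ facMoment μ Z 1 := integral_nonneg fun _ => Nat.cast_nonneg _
  calc _ ≤ ∫ ω, ‖Complex.exp (u * Z ω) - 1‖ ∂μ := norm_integral_le_integral_norm _
    _ ≤ Real.exp (h * C) * (2 + h) * facMoment μ Z 1 :=
        integral_le_mul_facMoment_one (fun _ => norm_nonneg _) hZ hZC <| by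
          filter_upwards [hZC] with ω hω
          exact norm_cexp_mul_natCast_sub_one_le hh hu hω
    _ ≤ _ := by
        rw [mul_pow, Real.sq_sqrt (by linarith)]
        gcongr
        nlinarith

lemma integral_norm_cexp_mul_sub_one_sq_le (hC : 0 ≤ C) (hh : 0 ≤ h) (hu : u.re ≤ h)
    (hZ : Measurable Z) (hZC : ∀ᵐ ω ∂μ, (Z ω : ℝ) ≤ C) :
    ∫ ω, ‖Complex.exp (u * Z ω) - 1‖ ^ 2 ∂μ ≤
      (Real.exp (h * C) * (2 + h) * √C) ^ 2 * facMoment μ Z 1 := by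
  rw [mul_pow, Real.sq_sqrt hC]
  refine integral_le_mul_facMoment_one (fun _ => sq_nonneg _) hZ hZC ?_
  filter_upwards [hZC] with ω hω
  have hZ0 : (0 : ℝ) ≤ Z ω := Nat.cast_nonneg _
  calc ‖Complex.exp (u * Z ω) - 1‖ ^ 2 ≤ (Real.exp (h * C) * (2 + h) * Z ω) ^ 2 := by
        gcongr
        exact norm_cexp_mul_natCast_sub_one_le hh hu hω
    _ ≤ (Real.exp (h * C) * (2 + h)) ^ 2 * C * Z ω := by
        rw [mul_pow, mul_assoc]
        gcongr
        nlinarith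

end ExpEstimates

theorem OneDependent.norm_heinrichE_heinrichY_le {Ω : Type*} [MeasurableSpace Ω] {μ : Measure Ω}
    [IsProbabilityMeasure μ] {n : ℕ} {X : ℕ → Ω → ℕ} (hdep : OneDependent μ n X)
    (hX : ∀ i, Measurable (X i)) {u : ℂ} {h C : ℝ} (hh : 0 ≤ h) (hu : u.re ≤ h)
    (hbd : ∀ i, 1 ≤ i → i ≤ n → ∀ᵐ ω ∂μ, (X i ω : ℝ) ≤ C) {j k : ℕ} (hj : 1 ≤ j) (hk : k ≤ n) :
    ‖heinrichE μ (heinrichY X u) j k‖ ≤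
      2 ^ (k - j) * ∏ i ∈ Icc j k, √(∫ ω, ‖heinrichY X u i ω‖ ^ 2 ∂μ) :=
  norm_heinrichE_le _ (fun _ => Real.sqrt_nonneg _) fun l m hl hm =>
    hdep.norm_integral_prod_le hX (fun _ m => Complex.exp (u * m) - 1)
      (c := Real.exp (h * C) * (2 + h) * C) (hj.trans hl)
      (hm.trans hk) fun i hi => by
        obtain ⟨hli, him⟩ := mem_Icc.1 hi
        filter_upwards [hbd i (hj.trans (hl.trans hli)) (him.trans (hm.trans hk))] with ω hω
        exact (norm_cexp_mul_natCast_sub_one_le hh hu hω).trans (by gcongr)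

/-- Lemma 4, estimates (26): Heinrich's functions are well-defined (nonzero, so all
denominators in the recursion are nonzero) and close to `1`. Here `ν₁(0) = 0` since
`X 0` is not part of the sequence; we encode `ν₁(k-1)` via natural subtraction with
the hypothesis that `X 0 = 0` (the usual convention `X_k = 0` for `k ≤ 0`). -/
theorem heinrichPhi_close_to_one (C0 h t : ℝ) (hC0 : 1 ≤ C0) (hh : 0 ≤ h)
    (u : ℂ) (hu : u = t * Complex.I + h)
    (Ω : Type*) [MeasurableSpace Ω] (μ : Measure Ω) [IsProbabilityMeasure μ]
    (n : ℕ) (X : ℕ → Ω → ℕ) (hX : ∀ i, Measurable (X i))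
    (hzero : ∀ ω, X 0 ω = 0)
    (hbd : ∀ i, 1 ≤ i → i ≤ n → ∀ᵐ ω ∂μ, ((X i ω : ℝ)) ≤ C0)
    (hdep : OneDependent μ n X)
    (a : ℝ) (ha : a = Real.exp (h * C0) * (2 + h) * Real.sqrt C0)
    (hsmall : ∀ j ∈ Finset.Icc 1 n, a ^ 2 * facMoment μ (X j) 1 ≤ 1 / 100) :
    ∀ k, 1 ≤ k → k ≤ n →
      heinrichPhi μ X u k ≠ 0 ∧
      ‖heinrichPhi μ X u k - 1‖ ≤
        (a ^ 2 / 6) * (10 * facMoment μ (X (k - 1)) 1 + 13 * facMoment μ (X k) 1) ∧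
      ‖heinrichPhi μ X u k - 1‖ ≤ 1 / 25 ∧
      1 / ‖heinrichPhi μ X u k‖ ≤ 10 / 9 := by
  set ν : ℕ → ℝ := fun i => facMoment μ (X i) 1
  have hu_re : u.re ≤ h := by simp [hu]
  -- `X 0 = 0` extends the hypotheses to the index `0`, where `ν 0 = 0`
  have hbd' : ∀ i ≤ n, ∀ᵐ ω ∂μ, (X i ω : ℝ) ≤ C0 := by
    rintro (_ | i) hi
    · exact ae_of_all _ fun ω => by simp [hzero]; linarith
    · exact hbd _ (by omega) hi
  have hν : ∀ i ≤ n, 0 ≤ ν i ∧ a ^ 2 * ν i ≤ 1 / 100 := by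
    rintro (_ | i) hi
    · simp [ν, facMoment, hzero]
    · exact ⟨integral_nonneg fun _ => Nat.cast_nonneg _, hsmall _ (mem_Icc.2 ⟨by omega, hi⟩)⟩
  have hclose := norm_heinrichPhi_sub_one_le_of_moments
    (fun i _ hin => integrable_cexp_mul_sub_one hh hu_re (hX i) (hbd' i hin)) hν
    (fun i hi => ha ▸ norm_integral_cexp_mul_sub_one_le hC0 hh hu_re (hX i) (hbd' i hi))
    (fun i hi => ha ▸
      integral_norm_cexp_mul_sub_one_sq_le (by linarith) hh hu_re (hX i) (hbd' i hi))
    (fun j k hj hk => hdep.norm_heinrichE_heinrichY_le hX hh hu_re hbd hj hk)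
  intro k hk1 hkn
  have h25 : ‖heinrichPhi μ X u k - 1‖ ≤ 1 / 25 :=
    (hclose k hk1 hkn).trans (by nlinarith [hν (k - 1) (by omega), hν k hkn])
  have hnorm := one_sub_le_norm_of_norm_sub_one_le h25
  exact ⟨norm_pos_iff.1 (by linarith), hclose k hk1 hkn, h25,
    by rw [div_le_iff₀ (by linarith)]; linarith⟩
end
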